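/- Let e(λ) = Σᵢ xᵢ²/(λ−aᵢ) with canonical {π_i,x_j} = δ_{ij}, and let H̃₁ = ¼|π×x|² − ⟨x,Bx⟩(γ+δ⟨x,Bx⟩) + δ⟨x,A^∨x⟩ restricted to |x| = 1, ⟨x,π⟩ = 0. Define u₁,u₂ as the roots of e(λ) = 0 and v_j = −½ Σᵢ xᵢπᵢ/(u_j − aᵢ). Then the separated equations hold: v_j² + P̃₃(u_j)/det(u_j − A) = 0 for j = 1,2, where P̃₃(λ) = δλ³ + γλ² + H̃₁λ + H̃₂ and H̃₂ = −¼⟨π×x, A(π×x)⟩ + ⟨x,A^∨x⟩(γ+δ⟨x,Bx⟩). -/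

import Mathlib

open scoped BigOperators

def dot3 (u v : Fin 3 → ℝ) : ℝ := ∑ i, u i * v i

def cross3 (u v : Fin 3 → ℝ) : Fin 3 → ℝ :=
  ![u 1 * v 2 - u 2 * v 1, u 2 * v 0 - u 0 * v 2, u 0 * v 1 - u 1 * v 0]

/-- H̃₁ = ¼|π×x|² − ⟨x,Bx⟩(γ+δ⟨x,Bx⟩) + δ⟨x,A^∨x⟩. -/
noncomputable def Ht1 (a : Fin 3 → ℝ) (γ δ : ℝ) (x π : Fin 3 → ℝ) : ℝ :=
  (1/4) * dot3 (cross3 π x) (cross3 π x)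
  - dot3 x (fun i => (a (i+1) + a (i+2)) * x i) *
      (γ + δ * dot3 x (fun i => (a (i+1) + a (i+2)) * x i))
  + δ * dot3 x (fun i => (a (i+1) * a (i+2)) * x i)

/-- H̃₂ = −¼⟨π×x, A(π×x)⟩ + ⟨x,A^∨x⟩(γ+δ⟨x,Bx⟩). -/
noncomputable def Ht2 (a : Fin 3 → ℝ) (γ δ : ℝ) (x π : Fin 3 → ℝ) : ℝ :=
  -(1/4) * dot3 (cross3 π x) (fun i => a i * cross3 π x i)
  + dot3 x (fun i => (a (i+1) * a (i+2)) * x i) *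
      (γ + δ * dot3 x (fun i => (a (i+1) + a (i+2)) * x i))

/-!
Clearing the denominators `∏ i, (λ - aᵢ)` in `e(λ)` and `v` leaves the numerators
`E(λ) = Σ xᵢ² Πᵢ(λ)` and `N(λ) = Σ xᵢπᵢ Πᵢ(λ)`, where `Πᵢ(λ) = ∏_{k ≠ i} (λ - a_k)`.
A weighted Lagrange identity gives `N² = (Σ πᵢ² Πᵢ) E - det(λ - A) ⟨π×x, (λ - A)(π×x)⟩`, and
`P̃₃(λ) = ¼⟨π×x, (λ - A)(π×x)⟩ + (γ + δ(λ + ⟨x,Bx⟩)) E(λ)` once `|x| = 1`.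
At a root of `e` we have `E = 0`, hence `N² = -4 det(λ - A) P̃₃(λ)`, which is the separated equation.
-/

open Finset

section CommonNumerator

variable {ι : Type*} [Fintype ι] [DecidableEq ι]

def commonNumerator (a f : ι → ℝ) (lam : ℝ) : ℝ :=
  ∑ i, f i * ∏ k ∈ univ.erase i, (lam - a k)

theorem sum_div_sub_eq_commonNumerator_div (a f : ι → ℝ) {lam : ℝ} (h : ∀ i, lam ≠ a i) :
    ∑ i, f i / (lam - a i) = commonNumerator a f lam / ∏ i, (lam - a i) := by
  rw [commonNumerator, sum_div]
  refine sum_congr rfl fun i _ => ?_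
  have hP : ∏ k ∈ univ.erase i, (lam - a k) ≠ 0 :=
    prod_ne_zero_iff.mpr fun k _ => sub_ne_zero.mpr (h k)
  rw [← mul_prod_erase univ (fun k => lam - a k) (mem_univ i), mul_div_mul_right _ _ hP]

end CommonNumerator

theorem commonNumerator_fin_three (a f : Fin 3 → ℝ) (lam : ℝ) :
    commonNumerator a f lam = f 0 * ((lam - a 1) * (lam - a 2))
      + f 1 * ((lam - a 0) * (lam - a 2)) + f 2 * ((lam - a 0) * (lam - a 1)) := by
  have h0 : univ.erase (0 : Fin 3) = {1, 2} := by decide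
  have h1 : univ.erase (1 : Fin 3) = {0, 2} := by decide
  have h2 : univ.erase (2 : Fin 3) = {0, 1} := by decide
  simp only [commonNumerator, Fin.sum_univ_three, h0, h1, h2,
    prod_pair (by decide : (1 : Fin 3) ≠ 2), prod_pair (by decide : (0 : Fin 3) ≠ 2),
    prod_pair (by decide : (0 : Fin 3) ≠ 1)]

section ThreeDim

variable (a x π : Fin 3 → ℝ) (lam : ℝ)

def crossForm : ℝ := dot3 (cross3 π x) (fun i => (lam - a i) * cross3 π x i)

theorem commonNumerator_sq_fin_three :
    commonNumerator a (fun i => x i ^ 2) lam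
      = dot3 x x * lam ^ 2 - dot3 x (fun i => (a (i+1) + a (i+2)) * x i) * lam
        + dot3 x (fun i => (a (i+1) * a (i+2)) * x i) := by
  simp only [commonNumerator_fin_three, dot3, Fin.sum_univ_three, Fin.reduceAdd]
  ring

/-- Lagrange's identity with weights `Πᵢ = ∏_{k ≠ i} (lam - a k)`: since `Πᵢ Πⱼ` is the full
product times `lam - a k` for the third index `k`, the cross terms assemble into `crossForm`. -/
theorem commonNumerator_mul_sq_fin_three :
    commonNumerator a (fun i => x i * π i) lam ^ 2
      = commonNumerator a (fun i => π i ^ 2) lam * commonNumerator a (fun i => x i ^ 2) lam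
        - (∏ i, (lam - a i)) * crossForm a x π lam := by
  simp only [commonNumerator_fin_three, crossForm, cross3, dot3, Fin.sum_univ_three,
    Fin.prod_univ_three, Matrix.cons_val_zero, Matrix.cons_val_one, Matrix.cons_val_two,
    Matrix.head_cons, Matrix.tail_cons]
  ring

/-- The second factor is `commonNumerator a (fun i => x i ^ 2) lam` when `|x| = 1`, so it vanishes
at the roots of `e`. -/
theorem cubic_eq_crossForm_add (γ δ : ℝ) :
    δ * lam ^ 3 + γ * lam ^ 2 + Ht1 a γ δ x π * lam + Ht2 a γ δ x π
      = (1/4) * crossForm a x π lam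
        + (γ + δ * (lam + dot3 x (fun i => (a (i+1) + a (i+2)) * x i)))
          * (lam ^ 2 - dot3 x (fun i => (a (i+1) + a (i+2)) * x i) * lam
            + dot3 x (fun i => (a (i+1) * a (i+2)) * x i)) := by
  simp only [Ht1, Ht2, crossForm, dot3, Fin.sum_univ_three]
  ring

theorem commonNumerator_sq_add_four_mul_cubic_eq_zero (γ δ : ℝ) (hx : dot3 x x = 1)
    (hE : commonNumerator a (fun i => x i ^ 2) lam = 0) :
    commonNumerator a (fun i => x i * π i) lam ^ 2
      + 4 * (∏ i, (lam - a i))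
        * (δ * lam ^ 3 + γ * lam ^ 2 + Ht1 a γ δ x π * lam + Ht2 a γ δ x π) = 0 := by
  rw [cubic_eq_crossForm_add]
  set g := γ + δ * (lam + dot3 x (fun i => (a (i+1) + a (i+2)) * x i))
  linear_combination commonNumerator_mul_sq_fin_three a x π lam
    + (commonNumerator a (fun i => π i ^ 2) lam + 4 * (∏ i, (lam - a i)) * g) * hE
    - 4 * (∏ i, (lam - a i)) * g * (commonNumerator_sq_fin_three a x lam + lam ^ 2 * hx)

end ThreeDim

theorem separated_equations_general (a : Fin 3 → ℝ)
    (γ δ : ℝ) (x π : Fin 3 → ℝ)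
    (hx : dot3 x x = 1)
    (u : Fin 2 → ℝ) (hua : ∀ j i, u j ≠ a i)
    (hroot : ∀ j, (∑ i, x i ^ 2 / (u j - a i)) = 0) (j : Fin 2) :
    (-(1/2) * ∑ i, x i * π i / (u j - a i)) ^ 2
      + (δ * u j ^ 3 + γ * u j ^ 2 + Ht1 a γ δ x π * u j + Ht2 a γ δ x π)
        / ∏ i, (u j - a i) = 0 := by
  have hdet : ∏ i, (u j - a i) ≠ 0 := prod_ne_zero_iff.mpr fun i _ => sub_ne_zero.mpr (hua j i)
  have hE : commonNumerator a (fun i => x i ^ 2) (u j) = 0 := by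
    simpa [sum_div_sub_eq_commonNumerator_div a _ (hua j), hdet] using hroot j
  rw [sum_div_sub_eq_commonNumerator_div a _ (hua j)]
  field_simp
  linear_combination commonNumerator_sq_add_four_mul_cubic_eq_zero a x π (u j) γ δ hx hE

/-- Separated equations: if u₁,u₂ are the roots of e(λ) = Σᵢ xᵢ²/(λ−aᵢ) and
v_j = −½Σᵢ xᵢπᵢ/(u_j−aᵢ), then v_j² + P̃₃(u_j)/det(u_j−A) = 0, where
P̃₃(λ) = δλ³ + γλ² + H̃₁λ + H̃₂. -/
theorem separated_equations (a : Fin 3 → ℝ) (hdist : ∀ i j, i ≠ j → a i ≠ a j)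
    (γ δ : ℝ) (x π : Fin 3 → ℝ)
    (hx : dot3 x x = 1) (hxπ : dot3 x π = 0)
    (u : Fin 2 → ℝ) (hua : ∀ j i, u j ≠ a i)
    (hroot : ∀ j, (∑ i, x i ^ 2 / (u j - a i)) = 0) (j : Fin 2) :
    (-(1/2) * ∑ i, x i * π i / (u j - a i)) ^ 2
      + (δ * u j ^ 3 + γ * u j ^ 2 + Ht1 a γ δ x π * u j + Ht2 a γ δ x π)
        / ∏ i, (u j - a i) = 0 :=
  separated_equations_general a γ δ x π hx u hua hroot j
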